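/- arXiv:0907.3182 — 7 statements merged into one kernel-verified Lean document; each statement's English description precedes it below -/
import Mathlib

section
/- Let Γ be a finitely generated abelian group acting on a metric space (X,d) by homotheties, with ratio homomorphism ρ : Γ → ℝ>0, generated by elements h₁,…,h_n with ρ(h_i) > 1 for all i. Then for every fixed x ∈ X there exists a constant K_x such that d(x, f(x)) < K_x for every f ∈ Γ with ρ(f) < 1. -/
/-- For a finitely generated abelian group `Γ` acting by homotheties on a metric
space, generated by `h i` with `ρ (h i) > 1`, the distance `d(x, f x)` is bounded uniformly
over all contracting `f ∈ Γ` (those with `ρ f < 1`). -/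
theorem stmt_4 {Γ X : Type*} [CommGroup Γ] [MetricSpace X] [MulAction Γ X]
    (ρ : Γ → ℝ) (hρpos : ∀ g : Γ, 0 < ρ g)
    (hρmul : ∀ g h : Γ, ρ (g * h) = ρ g * ρ h)
    {n : ℕ} (h : Fin n → Γ)
    (hgen : Subgroup.closure (Set.range h) = (⊤ : Subgroup Γ))
    (hρh : ∀ i : Fin n, 1 < ρ (h i))
    (hhom : ∀ (f : Γ) (x y : X), dist (f • x) (f • y) = ρ f * dist x y)
    (x : X) :
    ∃ K : ℝ, ∀ f : Γ, ρ f < 1 → dist x (f • x) < K := by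
  have hρ1 : ρ 1 = 1 := by have := hρmul 1 1; rw [one_mul] at this; nlinarith [hρpos 1]
  rcases Nat.eq_zero_or_pos n with hn | hn
  · -- n = 0 : the group is trivial, statement vacuous
    refine ⟨1, fun f hf => ?_⟩
    subst hn
    have hr : Set.range h = ∅ := Set.range_eq_empty h
    rw [hr, Subgroup.closure_empty] at hgen
    have hfmem : f ∈ (⊥ : Subgroup Γ) := by rw [hgen]; trivial
    rw [Subgroup.mem_bot] at hfmem
    rw [hfmem, hρ1] at hf
    exact absurd hf (lt_irrefl 1)
  · set g : Γ := h ⟨0, hn⟩ with hg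
    set r : ℝ := ρ g with hrdef
    have hr1 : 1 < r := hρh ⟨0, hn⟩
    set a : ℝ := dist x (g • x) with ha
    have ha0 : 0 ≤ a := dist_nonneg
    -- ρ of powers
    have hpow : ∀ m : ℕ, ρ (g ^ m) = r ^ m := by
      intro m
      induction m with
      | zero => simpa using hρ1
      | succ k ih => rw [pow_succ, hρmul, ih, pow_succ]
    -- distance bound for powers of g
    have hD : ∀ m : ℕ, dist x ((g ^ m) • x) ≤ a * ((r ^ m - 1) / (r - 1)) := by
      intro m
      induction m with
      | zero => simp
      | succ k ih =>
        have hsplit : (g ^ (k + 1)) • x = g • ((g ^ k) • x) := by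
          rw [pow_succ']; rw [mul_smul]
        have htri : dist x ((g ^ (k + 1)) • x) ≤
            dist x (g • x) + dist (g • x) (g • ((g ^ k) • x)) := by
          rw [hsplit]; exact dist_triangle _ _ _
        have hh : dist (g • x) (g • ((g ^ k) • x)) = r * dist x ((g ^ k) • x) :=
          hhom g x _
        have hdk : 0 ≤ dist x ((g ^ k) • x) := dist_nonneg
        have hrk : (1:ℝ) ≤ r ^ k := one_le_pow₀ hr1.le
        rw [hh] at htri
        have hr0 : 0 < r - 1 := by linarith
        have hrpos : 0 < r := by linarith
        have heq : a + r * (a * ((r ^ k - 1) / (r - 1)))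
            = a * ((r ^ (k + 1) - 1) / (r - 1)) := by
          field_simp
          ring
        have hmul := mul_le_mul_of_nonneg_left ih hrpos.le
        linarith
    -- choose m with r ^ m > 2
    obtain ⟨m, hm⟩ : ∃ m : ℕ, (2:ℝ) < r ^ m := pow_unbounded_of_one_lt 2 hr1
    refine ⟨2 * a / (r - 1) + 1, fun f hf => ?_⟩
    set d : ℝ := dist x (f • x) with hd
    have hd0 : 0 ≤ d := dist_nonneg
    set D : ℝ := dist x ((g ^ m) • x) with hDdef
    have hD0 : 0 ≤ D := dist_nonneg
    have hcomm : (g ^ m) • (f • x) = f • ((g ^ m) • x) := by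
      rw [← mul_smul, ← mul_smul, mul_comm]
    have hkey : r ^ m * d = dist ((g ^ m) • x) (f • ((g ^ m) • x)) := by
      rw [← hcomm, hhom, hpow]
    have htri : dist ((g ^ m) • x) (f • ((g ^ m) • x)) ≤
        dist ((g ^ m) • x) x + dist x (f • x) + dist (f • x) (f • ((g ^ m) • x)) :=
      dist_triangle4 _ _ _ _
    have hlast : dist (f • x) (f • ((g ^ m) • x)) = ρ f * D := hhom f x _
    have hfirst : dist ((g ^ m) • x) x = D := dist_comm _ _
    have hρf0 : 0 < ρ f := hρpos f
    have hmain : r ^ m * d ≤ 2 * D + d := by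
      rw [hkey]
      have : ρ f * D ≤ D := by nlinarith
      rw [hlast, hfirst] at htri
      nlinarith
    have hDb := hD m
    have hr0 : 0 < r - 1 := by linarith
    have hrm1 : (1:ℝ) < r ^ m - 1 := by linarith
    -- (r^m - 1) * d ≤ 2 D ≤ 2 a (r^m - 1)/(r - 1)
    have h1 : (r ^ m - 1) * d ≤ 2 * D := by linarith
    have h2 : 2 * D ≤ 2 * a * ((r ^ m - 1) / (r - 1)) := by
      rw [← hDdef] at hDb; nlinarith
    have h3 : (r ^ m - 1) * d ≤ (r ^ m - 1) * (2 * a / (r - 1)) := by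
      rw [div_eq_mul_inv] at h2 ⊢
      calc (r ^ m - 1) * d ≤ 2 * D := h1
        _ ≤ 2 * a * ((r ^ m - 1) * (r - 1)⁻¹) := h2
        _ = (r ^ m - 1) * (2 * a * (r - 1)⁻¹) := by ring
    have h4 : d ≤ 2 * a / (r - 1) :=
      le_of_mul_le_mul_left (by linarith [h3]) (by linarith : (0:ℝ) < r ^ m - 1)
    linarith
end

section
/- Let (X,d) be a locally compact metric space and Γ a group acting freely and properly discontinuously by homotheties on X with ratio homomorphism ρ : Γ → ℝ>0, such that the quotient X/Γ is compact and ρ has trivial kernel. Let (x_n) be a non-convergent Cauchy sequence in X. Then there exist x ∈ X and a sequence (f_n) in Γ with ρ(f_n) → 0 such that d(x_n, f_n(x)) → 0. -/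
open Filter Topology

/-- In a locally compact space with cocompact group action (acting by continuous maps),
there is a compact set whose translates cover. -/
theorem exists_compact_orbit_cover {Γ X : Type*} [Group Γ] [TopologicalSpace X]
    [LocallyCompactSpace X] [MulAction Γ X]
    (hcont : ∀ g : Γ, Continuous (fun y : X => g • y))
    [CompactSpace (Quotient (MulAction.orbitRel Γ X))] :
    ∃ K : Set X, IsCompact K ∧ ∀ z : X, ∃ g : Γ, ∃ w ∈ K, g • w = z := by
  classical
  set π : X → Quotient (MulAction.orbitRel Γ X) := Quotient.mk (MulAction.orbitRel Γ X) with hπ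
  have hrel : ∀ a b : X, π a = π b ↔ ∃ g : Γ, g • b = a := by
    intro a b
    rw [hπ, Quotient.eq]
    exact Iff.rfl
  have hopen : ∀ U : Set X, IsOpen U → IsOpen (π '' U) := by
    intro U hU
    have hpre : π ⁻¹' (π '' U) = ⋃ g : Γ, (fun y : X => g • y) '' U := by
      ext z
      simp only [Set.mem_preimage, Set.mem_image, Set.mem_iUnion]
      constructor
      · rintro ⟨w, hw, hwz⟩
        obtain ⟨g, hg⟩ := (hrel w z).mp hwz
        exact ⟨g⁻¹, w, hw, by rw [← hg]; simp⟩
      · rintro ⟨g, w, hw, hwz⟩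
        exact ⟨w, hw, ((hrel w z).mpr ⟨g⁻¹, by rw [← hwz]; simp⟩).symm ▸ rfl⟩
    have : IsOpen (π ⁻¹' (π '' U)) := by
      rw [hpre]
      refine isOpen_iUnion fun g => ?_
      have : (fun y : X => g • y) '' U = (fun y : X => g⁻¹ • y) ⁻¹' U := by
        ext z
        simp only [Set.mem_image, Set.mem_preimage]
        constructor
        · rintro ⟨w, hw, rfl⟩; simpa using hw
        · intro h; exact ⟨g⁻¹ • z, h, by simp⟩
      rw [this]
      exact hU.preimage (hcont g⁻¹)
    exact isQuotientMap_quot_mk.isOpen_preimage.mp this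
  choose V hVc hVn using fun a : X => exists_compact_mem_nhds (x := a)
  have hcover : Set.univ ⊆ ⋃ a : X, π '' interior (V a) := by
    intro q _
    obtain ⟨a, rfl⟩ := Quotient.exists_rep q
    exact Set.mem_iUnion.mpr ⟨a, ⟨a, mem_interior_iff_mem_nhds.mpr (hVn a), rfl⟩⟩
  obtain ⟨t, ht⟩ := isCompact_univ.elim_finite_subcover (fun a : X => π '' interior (V a))
    (fun a => hopen _ isOpen_interior) hcover
  refine ⟨⋃ a ∈ t, V a, t.isCompact_biUnion fun a _ => hVc a, fun z => ?_⟩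
  have := ht (Set.mem_univ (π z))
  simp only [Set.mem_iUnion] at this
  obtain ⟨a, hat, w, hw, hwz⟩ := this
  obtain ⟨g, hg⟩ := (hrel z w).mp hwz.symm
  exact ⟨g, w, Set.mem_biUnion hat (interior_subset hw), hg⟩


/-- On a locally compact metric space with a free, properly discontinuous,
cocompact action by homotheties with trivially-kerneled ratio homomorphism `ρ`, every
non-convergent Cauchy sequence is equivalent to a sequence `(f_n • p)` with `ρ (f_n) → 0`. -/
theorem stmt_6 {Γ X : Type*} [Group Γ] [MetricSpace X] [LocallyCompactSpace X] [MulAction Γ X]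
    (ρ : Γ → ℝ) (hρpos : ∀ g : Γ, 0 < ρ g)
    (hρmul : ∀ g h : Γ, ρ (g * h) = ρ g * ρ h)
    (hhom : ∀ (g : Γ) (x y : X), dist (g • x) (g • y) = ρ g * dist x y)
    (hfree : ∀ (g : Γ) (x : X), g • x = x → g = 1)
    (hpd : ∀ x : X, ∃ U : Set X, IsOpen U ∧ x ∈ U ∧
      ∀ g : Γ, g ≠ 1 → Disjoint ((fun y => g • y) '' U) U)
    (hker : ∀ g : Γ, ρ g = 1 → g = 1)
    [CompactSpace (Quotient (MulAction.orbitRel Γ X))]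
    (x : ℕ → X) (hx : CauchySeq x)
    (hnc : ¬ ∃ l : X, Filter.Tendsto x Filter.atTop (nhds l)) :
    ∃ (p : X) (f : ℕ → Γ),
      Filter.Tendsto (fun n => ρ (f n)) Filter.atTop (nhds 0) ∧
      Filter.Tendsto (fun n => dist (x n) ((f n) • p)) Filter.atTop (nhds 0) := by
  classical
  have hcont : ∀ g : Γ, Continuous (fun y : X => g • y) := by
    intro g
    refine (LipschitzWith.of_dist_le_mul (K := ⟨ρ g, (hρpos g).le⟩) fun a b => ?_).continuous
    rw [hhom g a b]; exact le_refl _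
  obtain ⟨K, hKc, hK⟩ := exists_compact_orbit_cover (Γ := Γ) (X := X) hcont
  -- choose representatives
  choose g y hyK hgy using hK
  -- K is bounded
  obtain ⟨C, hC⟩ := Metric.isBounded_iff.mp hKc.isBounded
  set p : X := y (x 0) with hp
  have hpK : p ∈ K := hyK (x 0)
  -- the key claim
  have hρ0 : Filter.Tendsto (fun n => ρ (g (x n))) Filter.atTop (nhds 0) := by
    by_contra hcon
    -- there is ε > 0 with ρ (g (x n)) ≥ ε frequently
    rw [Metric.tendsto_atTop] at hcon
    push_neg at hcon
    obtain ⟨ε, hε, hfreq⟩ := hcon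
    have hfreq' : ∀ N : ℕ, ∃ n ≥ N, ε ≤ ρ (g (x n)) := by
      intro N
      obtain ⟨n, hn, hd⟩ := hfreq N
      have hdd : dist (ρ (g (x n))) 0 = ρ (g (x n)) := by
        rw [Real.dist_eq, sub_zero, abs_of_pos (hρpos _)]
      rw [hdd] at hd
      exact ⟨n, hn, hd⟩
    obtain ⟨φ, hφmono, hφ⟩ := Filter.extraction_of_frequently_atTop
      (Filter.frequently_atTop.mpr hfreq')
    obtain ⟨zlim, hzlimK, ψ, hψmono, hψ⟩ := hKc.tendsto_subseq (x := fun k => y (x (φ k)))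
      (fun k => hyK (x (φ k)))
    set σ : ℕ → ℕ := φ ∘ ψ with hσ
    have hσmono : StrictMono σ := hφmono.comp hψmono
    have hσρ : ∀ k, ε ≤ ρ (g (x (σ k))) := fun k => hφ (ψ k)
    have hψ' : Filter.Tendsto (fun k => y (x (σ k))) Filter.atTop (nhds zlim) := hψ
    obtain ⟨U, hUopen, hUz, hUdisj⟩ := hpd zlim
    obtain ⟨r, hr, hball⟩ := Metric.isOpen_iff.mp hUopen zlim hUz
    have hxC := hx
    rw [Metric.cauchySeq_iff] at hxC
    obtain ⟨N₁, hN₁⟩ := hxC (ε * (r / 3)) (by positivity)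
    have hψ'' := hψ'
    rw [Metric.tendsto_atTop] at hψ''
    obtain ⟨N₂, hN₂⟩ := hψ'' (r / 3) (by positivity)
    set N := max N₁ N₂ with hN
    have h1 : ∀ m ≥ N, dist (y (x (σ m))) zlim < r / 3 := fun m hm =>
      hN₂ m (le_trans (le_max_right _ _) hm)
    set a := g (x (σ N)) with ha
    have key : ∀ k ≥ N, g (x (σ k)) = a := by
      intro k hk
      by_contra hne
      set b := g (x (σ k)) with hb
      set zN := y (x (σ N)) with hzN
      set zk := y (x (σ k)) with hzk
      have hd : dist (x (σ N)) (x (σ k)) < ε * (r / 3) :=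
        hN₁ (σ N) (le_trans (le_max_left _ _) hσmono.le_apply)
          (σ k) (le_trans (le_trans (le_max_left _ _) hk) hσmono.le_apply)
      have hxN : x (σ N) = a • zN := (hgy (x (σ N))).symm
      have hxk : x (σ k) = a • ((a⁻¹ * b) • zk) := by
        rw [← mul_smul, mul_inv_cancel_left]
        exact (hgy (x (σ k))).symm
      have he : dist (x (σ N)) (x (σ k)) = ρ a * dist zN ((a⁻¹ * b) • zk) := by
        rw [hxN, hxk, hhom]
      have h2 : dist zN ((a⁻¹ * b) • zk) < r / 3 := by
        have hεa : ε ≤ ρ a := hσρ N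
        have hρa : 0 < ρ a := hρpos a
        rw [he] at hd
        nlinarith [dist_nonneg (x := zN) (y := (a⁻¹ * b) • zk)]
      have hmem1 : (a⁻¹ * b) • zk ∈ U := by
        apply hball
        have : dist ((a⁻¹ * b) • zk) zlim < r := by
          have h3 := h1 N (le_refl N)
          calc dist ((a⁻¹ * b) • zk) zlim ≤ dist ((a⁻¹ * b) • zk) zN + dist zN zlim :=
                dist_triangle _ _ _
            _ < r / 3 + r / 3 := by rw [dist_comm ((a⁻¹ * b) • zk) zN]; exact add_lt_add h2 h3
            _ < r := by linarith
        exact this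
      have hmem2 : zk ∈ U := hball (by
        have := h1 k hk
        calc dist zk zlim < r / 3 := this
          _ < r := by linarith)
      have hne' : a⁻¹ * b ≠ 1 := by
        intro h
        apply hne
        have : a * (a⁻¹ * b) = a * 1 := by rw [h]
        rw [mul_inv_cancel_left, mul_one] at this
        exact this
      have := hUdisj (a⁻¹ * b) hne'
      exact (Set.disjoint_left.mp this ⟨zk, hmem2, rfl⟩) hmem1
    -- so the subsequence converges, contradiction
    apply hnc
    refine ⟨a • zlim, tendsto_nhds_of_cauchySeq_of_subseq hx hσmono.tendsto_atTop ?_⟩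
    have hlim : Filter.Tendsto (fun k => a • (y (x (σ k)))) Filter.atTop (nhds (a • zlim)) :=
      ((hcont a).continuousAt.tendsto).comp hψ'
    refine hlim.congr' ?_
    filter_upwards [Filter.eventually_ge_atTop N] with k hk
    show a • (y (x (σ k))) = x (σ k)
    rw [← key k hk]
    exact hgy (x (σ k))
  refine ⟨p, fun n => g (x n), hρ0, ?_⟩
  have hle : ∀ n, dist (x n) ((g (x n)) • p) ≤ ρ (g (x n)) * C := by
    intro n
    calc dist (x n) ((g (x n)) • p) = dist ((g (x n)) • (y (x n))) ((g (x n)) • p) := by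
          rw [hgy (x n)]
      _ = ρ (g (x n)) * dist (y (x n)) p := hhom _ _ _
      _ ≤ ρ (g (x n)) * C := by
          have := hC (hyK (x n)) hpK
          exact mul_le_mul_of_nonneg_left this (hρpos _).le
  have h0 : ∀ n, (0:ℝ) ≤ dist (x n) ((g (x n)) • p) := fun n => dist_nonneg
  have : Filter.Tendsto (fun n => ρ (g (x n)) * C) Filter.atTop (nhds 0) := by
    simpa using hρ0.mul_const C
  exact squeeze_zero h0 hle this
end

section
/- Let (X,d) be a locally compact, incomplete metric space with a group Γ acting freely and properly discontinuously by homotheties, with injective ratio homomorphism ρ : Γ → ℝ>0, Γ nontrivial and finitely generated, and X/Γ compact. Then the metric completion of X consists of X together with exactly one additional point; i.e., any two non-convergent Cauchy sequences in X are equivalent (the distance between their terms tends to zero). -/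
open Metric Filter

lemma aux_radius {X : Type*} [MetricSpace X] [LocallyCompactSpace X] {K : Set X}
    (hK : IsCompact K) : ∃ r₀ > (0:ℝ), ∀ k ∈ K, IsCompact (closedBall k r₀) := by
  have hloc : ∀ k : X, ∃ ε > (0:ℝ), IsCompact (closedBall k ε) := by
    intro k
    obtain ⟨s, hsc, hsn⟩ := exists_compact_mem_nhds k
    obtain ⟨ε, hε, hball⟩ := Metric.mem_nhds_iff.1 hsn
    refine ⟨ε/2, by positivity, hsc.of_isClosed_subset Metric.isClosed_closedBall
      (fun y hy => hball ?_)⟩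
    have := Metric.mem_closedBall.1 hy
    exact Metric.mem_ball.2 (lt_of_le_of_lt this (by linarith))
  choose ε hε hcomp using hloc
  rcases K.eq_empty_or_nonempty with rfl | hne
  · exact ⟨1, one_pos, by simp⟩
  have hcover : K ⊆ ⋃ k ∈ K, ball k (ε k / 2) := fun k hk =>
    Set.mem_biUnion hk (Metric.mem_ball.2 (by have := hε k; simp; linarith))
  obtain ⟨t, htK, htfin, hcov⟩ := hK.elim_finite_subcover_image (fun k _ => isOpen_ball) hcover
  lift t to Finset X using htfin
  have htne : t.Nonempty := by
    rcases hne with ⟨k, hk⟩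
    rcases Set.mem_iUnion₂.1 (hcov hk) with ⟨i, hit, _⟩
    exact ⟨i, hit⟩
  set r₀ : ℝ := (t.image (fun k => ε k / 2)).min' (htne.image _) with hr₀def
  have hr₀mem : r₀ ∈ t.image (fun k => ε k / 2) := Finset.min'_mem _ _
  have hr₀pos : 0 < r₀ := by
    rcases Finset.mem_image.1 hr₀mem with ⟨k, _, hk⟩
    rw [← hk]; have := hε k; linarith
  refine ⟨r₀, hr₀pos, fun k hk => ?_⟩
  rcases Set.mem_iUnion₂.1 (hcov hk) with ⟨i, hit, hki⟩
  refine (hcomp i).of_isClosed_subset Metric.isClosed_closedBall (fun y hy => ?_)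
  have h1 : dist y k ≤ r₀ := Metric.mem_closedBall.1 hy
  have h2 : dist k i < ε i / 2 := Metric.mem_ball.1 hki
  have h3 : r₀ ≤ ε i / 2 := Finset.min'_le _ _ (Finset.mem_image.2 ⟨i, hit, rfl⟩)
  exact Metric.mem_closedBall.2 ((dist_triangle y k i).trans (by linarith))

lemma aux_fund {Γ X : Type*} [Group Γ] [TopologicalSpace X] [LocallyCompactSpace X]
    [MulAction Γ X] [CompactSpace (Quotient (MulAction.orbitRel Γ X))]
    (hcont : ∀ γ : Γ, Continuous (fun x : X => γ • x)) :
    ∃ K : Set X, IsCompact K ∧ ∀ x : X, ∃ γ : Γ, γ • x ∈ K := by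
  set π : X → Quotient (MulAction.orbitRel Γ X) := Quotient.mk _ with hπ
  have hopen : ∀ W : Set X, IsOpen W → IsOpen (π '' W) := by
    intro W hW
    rw [isOpen_coinduced (f := π)]
    have : π ⁻¹' (π '' W) = ⋃ γ : Γ, (fun x : X => γ • x) ⁻¹' W := by
      ext z
      simp only [Set.mem_preimage, Set.mem_image, Set.mem_iUnion]
      constructor
      · rintro ⟨w, hw, hwz⟩
        have : w ∈ MulAction.orbit Γ z := Quotient.exact hwz
        rcases this with ⟨γ, hγ⟩
        exact ⟨γ, by simp only [] at hγ; rwa [hγ]⟩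
      · rintro ⟨γ, hγ⟩
        exact ⟨γ • z, hγ, Quotient.sound ⟨γ, rfl⟩⟩
    rw [this]
    exact isOpen_iUnion fun γ => (hcont γ).isOpen_preimage W hW
  have hV : ∀ x : X, ∃ s : Set X, IsCompact s ∧ s ∈ nhds x := fun x => exists_compact_mem_nhds x
  choose V hVc hVn using hV
  have hcover : (Set.univ : Set (Quotient (MulAction.orbitRel Γ X))) ⊆
      ⋃ x : X, π '' interior (V x) := by
    rintro q -
    obtain ⟨x, rfl⟩ := Quotient.exists_rep q
    exact Set.mem_iUnion.2 ⟨x, ⟨x, mem_interior_iff_mem_nhds.2 (hVn x), rfl⟩⟩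
  obtain ⟨t, hcov⟩ := isCompact_univ.elim_finite_subcover
    (fun x : X => π '' interior (V x)) (fun x => hopen _ isOpen_interior) hcover
  refine ⟨⋃ x ∈ t, V x, t.isCompact_biUnion (fun x _ => hVc x), fun x => ?_⟩
  have : π x ∈ ⋃ x₀ ∈ t, π '' interior (V x₀) := hcov (Set.mem_univ _)
  rcases Set.mem_iUnion₂.1 this with ⟨x₀, hx₀t, w, hw, hwx⟩
  have : w ∈ MulAction.orbit Γ x := Quotient.exact hwx
  rcases this with ⟨γ, hγ⟩
  exact ⟨γ, Set.mem_biUnion hx₀t (by simp only [] at hγ; rw [hγ]; exact interior_subset hw)⟩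

/-- A cone-like space (locally compact, incomplete, with a free, properly
discontinuous, cocompact action of a nontrivial finitely generated group by homotheties with
injective ratio homomorphism) is completed by adding a single point: any two non-convergent
Cauchy sequences are equivalent. -/
theorem stmt_7 {Γ X : Type*} [Group Γ] [MetricSpace X] [LocallyCompactSpace X] [MulAction Γ X]
    (hnoncomplete : ¬ CompleteSpace X)
    (ρ : Γ → ℝ) (hρpos : ∀ g : Γ, 0 < ρ g)
    (hρmul : ∀ g h : Γ, ρ (g * h) = ρ g * ρ h)
    (hρinj : Function.Injective ρ)
    (hΓfg : Group.FG Γ) (hΓnt : ∃ g : Γ, g ≠ 1)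
    (hhom : ∀ (g : Γ) (x y : X), dist (g • x) (g • y) = ρ g * dist x y)
    (hfree : ∀ (g : Γ) (x : X), g • x = x → g = 1)
    (hpd : ∀ x : X, ∃ U : Set X, IsOpen U ∧ x ∈ U ∧
      ∀ g : Γ, g ≠ 1 → Disjoint ((fun y => g • y) '' U) U)
    [CompactSpace (Quotient (MulAction.orbitRel Γ X))] :
    ∀ x y : ℕ → X, CauchySeq x → (¬ ∃ l : X, Filter.Tendsto x Filter.atTop (nhds l)) →
      CauchySeq y → (¬ ∃ l : X, Filter.Tendsto y Filter.atTop (nhds l)) →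
      Filter.Tendsto (fun n => dist (x n) (y n)) Filter.atTop (nhds 0) := by
  classical
  -- basic facts about ρ
  have hρ1 : ρ 1 = 1 := by
    have h := hρmul 1 1
    rw [one_mul] at h
    have h0 := hρpos 1
    nlinarith
  have hρinv : ∀ g : Γ, ρ g⁻¹ = (ρ g)⁻¹ := by
    intro g
    have h := hρmul g g⁻¹
    rw [mul_inv_cancel, hρ1] at h
    exact eq_inv_of_mul_eq_one_right h.symm
  have hcomm : ∀ a b : Γ, a * b = b * a := fun a b =>
    hρinj (by rw [hρmul, hρmul, mul_comm])
  obtain ⟨g₀, hg₀⟩ := hΓnt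
  have hg₀ρ : ρ g₀ ≠ 1 := fun h => hg₀ (hρinj (h.trans hρ1.symm))
  obtain ⟨g, hglt⟩ : ∃ g : Γ, ρ g < 1 := by
    rcases lt_or_gt_of_ne hg₀ρ with h | h
    · exact ⟨g₀, h⟩
    · refine ⟨g₀⁻¹, ?_⟩
      rw [hρinv]
      exact inv_lt_one_of_one_lt₀ h
  -- X is nonempty
  have hXne : Nonempty X := by
    by_contra h
    rw [not_nonempty_iff] at h
    exact hnoncomplete ⟨fun {f} hf => absurd (Filter.filter_eq_bot_of_isEmpty f) hf.1.ne'⟩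
  -- action maps are Lipschitz
  have hlip : ∀ γ : Γ, LipschitzWith (Real.toNNReal (ρ γ)) (fun z : X => γ • z) := fun γ =>
    LipschitzWith.of_dist_le_mul (fun a b => by
      rw [hhom, Real.coe_toNNReal _ (hρpos γ).le])
  have hucont : ∀ γ : Γ, UniformContinuous (fun z : X => γ • z) := fun γ =>
    (hlip γ).uniformContinuous
  -- extensions to the completion
  haveI : Nonempty (UniformSpace.Completion X) :=
    hXne.map (fun z : X => (z : UniformSpace.Completion X))
  set F : Γ → UniformSpace.Completion X → UniformSpace.Completion X :=
    fun γ => UniformSpace.Completion.map (fun z : X => γ • z) with hF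
  have hFcoe : ∀ (γ : Γ) (z : X), F γ (z : UniformSpace.Completion X) = ((γ • z : X) :
      UniformSpace.Completion X) := fun γ z => UniformSpace.Completion.map_coe (hucont γ) z
  have hFcont : ∀ γ : Γ, Continuous (F γ) := fun γ => UniformSpace.Completion.continuous_map
  have hFdist : ∀ (γ : Γ) (a b : UniformSpace.Completion X),
      dist (F γ a) (F γ b) = ρ γ * dist a b := by
    intro γ a b
    refine UniformSpace.Completion.induction_on₂ a b ?_ ?_
    · apply isClosed_eq
      · exact ((hFcont γ).comp continuous_fst).dist ((hFcont γ).comp continuous_snd)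
      · exact continuous_const.mul (continuous_fst.dist continuous_snd)
    · intro a b
      rw [hFcoe, hFcoe, UniformSpace.Completion.dist_eq, UniformSpace.Completion.dist_eq, hhom]
  have hFcomp : ∀ (a b : Γ) (q : UniformSpace.Completion X), F a (F b q) = F (a * b) q := by
    intro a b q
    have h1 : (fun z : X => a • z) ∘ (fun z : X => b • z) = fun z : X => (a * b) • z := by
      funext z; simp [mul_smul]
    have h2 := UniformSpace.Completion.map_comp (hucont a) (hucont b)
    rw [h1] at h2
    exact congrFun h2 q
  -- the fixed point of the contraction F g
  have hcontr : ContractingWith (Real.toNNReal (ρ g)) (F g) := by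
    constructor
    · rwa [← Real.toNNReal_one, Real.toNNReal_lt_toNNReal_iff one_pos]
    · exact LipschitzWith.of_dist_le_mul (fun a b => by
        rw [hFdist, Real.coe_toNNReal _ (hρpos g).le])
  set p : UniformSpace.Completion X := ContractingWith.fixedPoint (F g) hcontr with hp
  have hpfix : F g p = p := hcontr.fixedPoint_isFixedPt
  have hpuniq : ∀ q : UniformSpace.Completion X, F g q = q → q = p := by
    intro q hq
    have hd : dist q p = ρ g * dist q p := by
      conv_lhs => rw [← hq, ← hpfix]
      rw [hFdist]
    have hd0 : dist q p = 0 := by nlinarith [dist_nonneg (x := q) (y := p)]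
    exact eq_of_dist_eq_zero hd0
  have hγp : ∀ γ : Γ, F γ p = p := fun γ =>
    hpuniq _ (by rw [hFcomp, hcomm, ← hFcomp, hpfix])
  -- compact fundamental set and uniform radius
  obtain ⟨K, hKc, hKfund⟩ := aux_fund (fun γ : Γ => (hlip γ).continuous)
  obtain ⟨r₀, hr₀, hKball⟩ := aux_radius hKc
  have hKne : K.Nonempty := by
    obtain ⟨x₀⟩ := hXne
    obtain ⟨γ, hγ⟩ := hKfund x₀
    exact ⟨_, hγ⟩
  obtain ⟨kmax, hkmaxK, hCmax'⟩ := hKc.exists_isMaxOn hKne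
    (Continuous.continuousOn ((UniformSpace.Completion.continuous_coe X).dist
      (continuous_const (y := p))))
  have hCmax : ∀ k ∈ K, dist ((k : UniformSpace.Completion X)) p ≤
      dist ((kmax : UniformSpace.Completion X)) p := fun k hk => hCmax' hk
  set C : ℝ := dist ((kmax : UniformSpace.Completion X)) p with hCdef
  -- scaled compact balls
  have hscale : ∀ (γ : Γ) (k : X), k ∈ K → IsCompact (closedBall (γ • k) (ρ γ * r₀)) := by
    intro γ k hk
    have himg : closedBall (γ • k) (ρ γ * r₀) = (fun z : X => γ • z) '' closedBall k r₀ := by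
      ext w
      simp only [Set.mem_image, Metric.mem_closedBall]
      constructor
      · intro hw
        refine ⟨γ⁻¹ • w, ?_, smul_inv_smul γ w⟩
        have h1 : dist (γ⁻¹ • w) (γ⁻¹ • (γ • k)) = ρ γ⁻¹ * dist w (γ • k) := hhom γ⁻¹ w (γ • k)
        rw [inv_smul_smul] at h1
        rw [h1, hρinv]
        calc (ρ γ)⁻¹ * dist w (γ • k) ≤ (ρ γ)⁻¹ * (ρ γ * r₀) :=
              mul_le_mul_of_nonneg_left hw (inv_nonneg.2 (hρpos γ).le)
          _ = r₀ := inv_mul_cancel_left₀ (hρpos γ).ne' r₀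
      · rintro ⟨z, hz, rfl⟩
        rw [hhom]
        exact mul_le_mul_of_nonneg_left hz (hρpos γ).le
    rw [himg]
    exact (hKball k hk).image (hlip γ).continuous
  -- key lemma: any non-convergent Cauchy sequence converges to p in the completion
  have key : ∀ u : ℕ → X, CauchySeq u → (¬ ∃ l : X, Tendsto u atTop (nhds l)) →
      Tendsto (fun n => dist ((u n : UniformSpace.Completion X)) p) atTop (nhds 0) := by
    intro u hu hun
    choose γn hγn using fun n => hKfund (u n)
    set s : ℕ → ℝ := fun n => (ρ (γn n))⁻¹ with hsdef
    have hspos : ∀ n, 0 < s n := fun n => inv_pos.2 (hρpos _)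
    have hsC : ∀ n, dist ((u n : UniformSpace.Completion X)) p ≤ s n * C := by
      intro n
      have e1 : ((u n : UniformSpace.Completion X)) =
          F (γn n)⁻¹ (((γn n • u n : X) : UniformSpace.Completion X)) := by
        rw [hFcoe, inv_smul_smul]
      calc dist ((u n : UniformSpace.Completion X)) p
          = dist (F (γn n)⁻¹ (((γn n • u n : X) : UniformSpace.Completion X))) (F (γn n)⁻¹ p) := by
            rw [← e1, hγp]
        _ = ρ (γn n)⁻¹ * dist (((γn n • u n : X) : UniformSpace.Completion X)) p := hFdist _ _ _
        _ ≤ s n * C := by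
            rw [hρinv]
            exact mul_le_mul_of_nonneg_left (hCmax _ (hγn n)) (hspos n).le
    have hstend : Tendsto s atTop (nhds 0) := by
      by_contra hnot
      rw [Metric.tendsto_atTop] at hnot
      push_neg at hnot
      obtain ⟨ε, hε, hfreq⟩ := hnot
      obtain ⟨N, hN⟩ := Metric.cauchySeq_iff.1 hu (ε * r₀) (by positivity)
      obtain ⟨n₀, hn₀N, hn₀⟩ := hfreq N
      have hn₀' : ε ≤ s n₀ := by
        have : dist (s n₀) 0 = s n₀ := by
          rw [Real.dist_eq, sub_zero, abs_of_pos (hspos n₀)]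
        rw [this] at hn₀
        exact hn₀
      have hcpt : IsCompact (closedBall (u n₀) (s n₀ * r₀)) := by
        have e1 : u n₀ = (γn n₀)⁻¹ • (γn n₀ • u n₀) := (inv_smul_smul _ _).symm
        have e2 : s n₀ = ρ (γn n₀)⁻¹ := (hρinv _).symm
        rw [e1, e2]
        exact hscale _ _ (hγn n₀)
      have hmem : ∀ᶠ n in atTop, u n ∈ closedBall (u n₀) (s n₀ * r₀) := by
        filter_upwards [eventually_ge_atTop N] with n hn
        refine Metric.mem_closedBall.2 ?_
        have := hN n hn n₀ hn₀N
        have h2 : ε * r₀ ≤ s n₀ * r₀ := mul_le_mul_of_nonneg_right hn₀' hr₀.le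
        linarith
      obtain ⟨l, _, hl⟩ := hcpt.isSeqCompact.exists_tendsto_of_frequently_mem
        hmem.frequently hu
      exact hun ⟨l, hl⟩
    have := hstend.mul_const C
    rw [zero_mul] at this
    exact squeeze_zero (fun n => dist_nonneg) hsC this
  -- conclusion
  intro x y hx hxn hy hyn
  have h1 := key x hx hxn
  have h2 := key y hy hyn
  have hsum := h1.add h2
  rw [add_zero] at hsum
  refine squeeze_zero (fun n => dist_nonneg) (fun n => ?_) hsum
  rw [← UniformSpace.Completion.dist_eq]
  exact dist_triangle_right _ _ _
end

section
/- Let (X,d) be a metric space, ω a point of its completion with X ∩ {ω} = ∅, and δ(x) := d(x,ω) > 0 for all x ∈ X. Let Γ act on X by homotheties fixing ω in the completion (i.e. δ(f(x)) = ρ(f)·δ(x)), with X = Γ·Ω for some compact set Ω ⊆ X. Let ψ : X → ℝ>0 satisfy ψ(f(x)) = ρ(f)·ψ(x) for all f ∈ Γ, x ∈ X, and suppose ψ and 1/ψ are bounded on Ω. Then there exist constants 0 < k₁ ≤ k₂ with k₁·δ(x) ≤ ψ(x) ≤ k₂·δ(x) for all x ∈ X; i.e. ψ is quasi-linear. -/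
open UniformSpace

/-- A positive `Γ`-equivariant function of weight 1 on a cone-like space, bounded
above and below (away from zero) on a compact set `Ω` with `X = Γ·Ω`, is quasi-linear: it is
comparable to the distance `δ` to the singularity `ω` in the completion. -/
theorem stmt_8 {Γ X : Type*} [Group Γ] [MetricSpace X] [MulAction Γ X]
    (ρ : Γ → ℝ) (hρpos : ∀ g : Γ, 0 < ρ g)
    (hρmul : ∀ g h : Γ, ρ (g * h) = ρ g * ρ h)
    (ω : Completion X) (hω : ∀ x : X, (x : Completion X) ≠ ω)
    (hδ : ∀ (f : Γ) (x : X),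
      dist ((f • x : X) : Completion X) ω = ρ f * dist (x : Completion X) ω)
    (Ω : Set X) (hΩ : IsCompact Ω)
    (hcover : ∀ x : X, ∃ (f : Γ) (y : X), y ∈ Ω ∧ x = f • y)
    (ψ : X → ℝ) (hψpos : ∀ x : X, 0 < ψ x)
    (heq : ∀ (f : Γ) (x : X), ψ (f • x) = ρ f * ψ x)
    (hub : ∃ C : ℝ, ∀ x ∈ Ω, ψ x ≤ C)
    (hlb : ∃ c : ℝ, 0 < c ∧ ∀ x ∈ Ω, c ≤ ψ x) :
    ∃ k₁ k₂ : ℝ, 0 < k₁ ∧ k₁ ≤ k₂ ∧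
      ∀ x : X, k₁ * dist (x : Completion X) ω ≤ ψ x ∧
        ψ x ≤ k₂ * dist (x : Completion X) ω := by
  obtain ⟨C, hC⟩ := hub
  obtain ⟨c, hc, hcψ⟩ := hlb
  set δ : X → ℝ := fun x => dist (x : Completion X) ω with hδdef
  have hδpos : ∀ x : X, 0 < δ x := fun x => dist_pos.2 (hω x)
  have hδcont : Continuous δ :=
    (Completion.continuous_coe X).dist continuous_const
  rcases Set.eq_empty_or_nonempty Ω with hΩe | hne
  · refine ⟨1, 1, one_pos, le_refl _, fun x => ?_⟩
    obtain ⟨f, y, hy, _⟩ := hcover x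
    exact absurd hy (by simp [hΩe])
  · obtain ⟨ym, hym, hmin⟩ := hΩ.exists_isMinOn hne hδcont.continuousOn
    obtain ⟨yM, hyM, hmax⟩ := hΩ.exists_isMaxOn hne hδcont.continuousOn
    set m := δ ym
    set M := δ yM
    have hm : 0 < m := hδpos ym
    have hM : 0 < M := hδpos yM
    refine ⟨c / M, C / m, div_pos hc hM, ?_, fun x => ?_⟩
    · have hcC : c ≤ C := le_trans (hcψ ym hym) (hC ym hym)
      have hmM : m ≤ M := hmax hym
      have hC0 : 0 ≤ C := hc.le.trans (hcC)
      exact div_le_div₀ hC0 hcC hm hmM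
    · obtain ⟨f, y, hy, rfl⟩ := hcover x
      have hδx : δ (f • y) = ρ f * δ y := hδ f y
      have hψx : ψ (f • y) = ρ f * ψ y := heq f y
      have hρ := hρpos f
      have hδy := hδpos y
      constructor
      · show c / M * δ (f • y) ≤ ψ (f • y)
        rw [hδx, hψx]
        have h1 : c / M * δ y ≤ ψ y := by
          rw [div_mul_eq_mul_div, div_le_iff₀ hM]
          calc c * δ y ≤ ψ y * δ y := by
                exact mul_le_mul_of_nonneg_right (hcψ y hy) hδy.le
            _ ≤ ψ y * M := by
                exact mul_le_mul_of_nonneg_left (hmax hy) (hψpos y).le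
        calc c / M * (ρ f * δ y) = ρ f * (c / M * δ y) := by ring
          _ ≤ ρ f * ψ y := mul_le_mul_of_nonneg_left h1 hρ.le
      · show ψ (f • y) ≤ C / m * δ (f • y)
        rw [hδx, hψx]
        have h2 : ψ y ≤ C / m * δ y := by
          rw [div_mul_eq_mul_div, le_div_iff₀ hm]
          calc ψ y * m ≤ ψ y * δ y := by
                exact mul_le_mul_of_nonneg_left (hmin hy) (hψpos y).le
            _ ≤ C * δ y := mul_le_mul_of_nonneg_right (hC y hy) hδy.le
        calc ρ f * ψ y ≤ ρ f * (C / m * δ y) := mul_le_mul_of_nonneg_left h2 hρ.le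
          _ = C / m * (ρ f * δ y) := by ring
end

section
/- Let F : I → ℝ>0 and H : I → ℝ be differentiable functions on an open interval I ⊆ ℝ satisfying F' = F·H and H' ≥ 2ε·F^{-2} − 2H² for some ε > 0. Then H vanishes at most once on I; moreover if H(t₀) = 0 then H'(t₀) > 0, H < 0 on I ∩ (−∞,t₀) and H > 0 on I ∩ (t₀,∞), so t₀ is a global minimum of F. -/
/-!
At a zero of `H` the inequality gives `H' ≥ 2ε/F² > 0`, so every zero of `H` is an upward
crossing. A differentiable function all of whose zeros are upward crossings changes sign at most
once on an interval: if it were positive at `c` and nonpositive at a later `t`, its first zero `z`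
in `[c, t]` would be preceded by negative values, and the intermediate value theorem would produce
an earlier zero. Finally `F' = F H` has the sign of `H`, so `F` decreases up to the zero of `H` and
increases after it.
-/

open Filter Topology Set

namespace HasDerivAt

variable {f : ℝ → ℝ} {d x₀ : ℝ}

theorem eventually_neg_nhdsLT (hf : HasDerivAt f d x₀) (hd : 0 < d) (h0 : f x₀ = 0) :
    ∀ᶠ x in 𝓝[<] x₀, f x < 0 := by
  have hslope : ∀ᶠ x in 𝓝[<] x₀, 0 < slope f x₀ x :=
    ((hasDerivAt_iff_tendsto_slope.mp hf).eventually (eventually_gt_nhds hd)).filter_mono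
      (nhdsLT_le_nhdsNE x₀)
  filter_upwards [hslope, self_mem_nhdsWithin] with x hx hlt using neg_of_slope_pos hlt hx h0

theorem eventually_pos_nhdsGT (hf : HasDerivAt f d x₀) (hd : 0 < d) (h0 : f x₀ = 0) :
    ∀ᶠ x in 𝓝[>] x₀, 0 < f x := by
  have hslope : ∀ᶠ x in 𝓝[>] x₀, 0 < slope f x₀ x :=
    ((hasDerivAt_iff_tendsto_slope.mp hf).eventually (eventually_gt_nhds hd)).filter_mono
      (nhdsGT_le_nhdsNE x₀)
  filter_upwards [hslope, self_mem_nhdsWithin] with x hx hgt using pos_of_slope_pos hgt hx h0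

end HasDerivAt

section DerivPosAtZeros

variable {f f' : ℝ → ℝ} {I : Set ℝ} (hI : I.OrdConnected) (hf : ∀ x ∈ I, HasDerivAt f (f' x) x)
  (hf' : ∀ x ∈ I, f x = 0 → 0 < f' x)
include hI hf hf'

theorem pos_of_pos_of_le_of_deriv_pos_at_zeros {c t : ℝ} (hc : c ∈ I) (ht : t ∈ I) (hct : c ≤ t)
    (hfc : 0 < f c) : 0 < f t := by
  by_contra! hft
  have hcont : ContinuousOn f (Icc c t) := fun x hx =>
    (hf x (hI.out hc ht hx)).continuousAt.continuousWithinAt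
  set Z := Icc c t ∩ f ⁻¹' {0}
  have hZ : IsCompact Z :=
    isCompact_Icc.of_isClosed_subset (hcont.preimage_isClosed_of_isClosed isClosed_Icc
      isClosed_singleton) inter_subset_left
  obtain ⟨w, hw, hw0⟩ := intermediate_value_Icc' hct hcont ⟨hft, hfc.le⟩
  obtain ⟨z, ⟨hzct, hz0⟩, hzmin⟩ := hZ.exists_isLeast ⟨w, hw, hw0⟩
  have hcz : c < z := hzct.1.lt_of_ne (by rintro rfl; exact hfc.ne' hz0)
  obtain ⟨x, hxneg, hx⟩ := ((hf z (hI.out hc ht hzct)).eventually_neg_nhdsLT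
    (hf' z (hI.out hc ht hzct) hz0) hz0 |>.and (Ioo_mem_nhdsLT hcz)).exists
  have hxt : x ≤ t := hx.2.le.trans hzct.2
  obtain ⟨y, hy, hy0⟩ := intermediate_value_Icc' hx.1.le
    (hcont.mono (Icc_subset_Icc_right hxt)) ⟨hxneg.le, hfc.le⟩
  exact (hzmin ⟨⟨hy.1, hy.2.trans hxt⟩, hy0⟩).not_gt (hy.2.trans_lt hx.2)

theorem pos_of_eq_zero_of_lt_of_deriv_pos_at_zeros {t₀ t : ℝ} (ht₀ : t₀ ∈ I) (ht : t ∈ I)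
    (h0 : f t₀ = 0) (hlt : t₀ < t) : 0 < f t := by
  obtain ⟨c, hcpos, hc⟩ := ((hf t₀ ht₀).eventually_pos_nhdsGT (hf' t₀ ht₀ h0) h0 |>.and
    (Ioo_mem_nhdsGT hlt)).exists
  exact pos_of_pos_of_le_of_deriv_pos_at_zeros hI hf hf' (hI.out ht₀ ht (Ioo_subset_Icc_self hc))
    ht hc.2.le hcpos

theorem neg_of_eq_zero_of_gt_of_deriv_pos_at_zeros {t₀ t : ℝ} (ht₀ : t₀ ∈ I) (ht : t ∈ I)
    (h0 : f t₀ = 0) (hlt : t < t₀) : f t < 0 := by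
  by_contra! hft
  obtain ⟨x, hxneg, hx⟩ := ((hf t₀ ht₀).eventually_neg_nhdsLT (hf' t₀ ht₀ h0) h0 |>.and
    (Ioo_mem_nhdsLT hlt)).exists
  have hsub : Icc t x ⊆ I := (Icc_subset_Icc_right hx.2.le).trans (hI.out ht ht₀)
  obtain ⟨y, hy, hy0⟩ := intermediate_value_Icc' hx.1.le
    (fun z hz => (hf z (hsub hz)).continuousAt.continuousWithinAt) ⟨hxneg.le, hft⟩
  exact (pos_of_eq_zero_of_lt_of_deriv_pos_at_zeros hI hf hf' (hsub hy) ht₀ hy0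
    (hy.2.trans_lt hx.2)).ne' h0

end DerivPosAtZeros

theorem isMinOn_of_hasDerivAt_of_sign {g g' : ℝ → ℝ} {I : Set ℝ} {t₀ : ℝ} (hI : I.OrdConnected)
    (hg : ∀ x ∈ I, HasDerivAt g (g' x) x) (hleft : ∀ x ∈ I, x < t₀ → g' x ≤ 0)
    (hright : ∀ x ∈ I, t₀ < x → 0 ≤ g' x) (ht₀ : t₀ ∈ I) : IsMinOn g I t₀ := by
  intro t ht
  have hcont {a b : ℝ} (ha : a ∈ I) (hb : b ∈ I) : ContinuousOn g (Icc a b) := fun x hx =>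
    (hg x (hI.out ha hb hx)).continuousAt.continuousWithinAt
  rcases le_total t t₀ with htt₀ | ht₀t
  · refine antitoneOn_of_hasDerivWithinAt_nonpos (f' := g') (convex_Icc t t₀) (hcont ht ht₀)
      (fun x hx => ?_) (fun x hx => ?_) ⟨le_rfl, htt₀⟩ ⟨htt₀, le_rfl⟩ htt₀
    all_goals rw [interior_Icc] at hx
    · exact (hg x (hI.out ht ht₀ (Ioo_subset_Icc_self hx))).hasDerivWithinAt
    · exact hleft x (hI.out ht ht₀ (Ioo_subset_Icc_self hx)) hx.2
  · refine monotoneOn_of_hasDerivWithinAt_nonneg (f' := g') (convex_Icc t₀ t) (hcont ht₀ ht)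
      (fun x hx => ?_) (fun x hx => ?_) ⟨le_rfl, ht₀t⟩ ⟨ht₀t, le_rfl⟩ ht₀t
    all_goals rw [interior_Icc] at hx
    · exact (hg x (hI.out ht₀ ht (Ioo_subset_Icc_self hx))).hasDerivWithinAt
    · exact hright x (hI.out ht₀ ht (Ioo_subset_Icc_self hx)) hx.1

theorem stmt_11_general (I : Set ℝ) (hIc : I.OrdConnected)
    (F H H' : ℝ → ℝ) (ε : ℝ) (hε : 0 < ε)
    (hFpos : ∀ t ∈ I, 0 < F t)
    (hF : ∀ t ∈ I, HasDerivAt F (F t * H t) t)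
    (hH : ∀ t ∈ I, HasDerivAt H (H' t) t)
    (hineq : ∀ t ∈ I, 2 * ε / (F t) ^ 2 - 2 * (H t) ^ 2 ≤ H' t) :
    (∀ s ∈ I, ∀ t ∈ I, H s = 0 → H t = 0 → s = t) ∧
    (∀ t₀ ∈ I, H t₀ = 0 →
      0 < H' t₀ ∧ (∀ t ∈ I, t < t₀ → H t < 0) ∧ (∀ t ∈ I, t₀ < t → 0 < H t) ∧
      ∀ t ∈ I, F t₀ ≤ F t) := by
  have hH' : ∀ t ∈ I, H t = 0 → 0 < H' t := fun t ht h0 => by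
    have hFt := hFpos t ht
    have hεF : 0 < 2 * ε / F t ^ 2 := by positivity
    have hineq_t := hineq t ht
    rw [h0] at hineq_t
    linarith
  have hpos := @pos_of_eq_zero_of_lt_of_deriv_pos_at_zeros _ _ _ hIc hH hH'
  have hneg := @neg_of_eq_zero_of_gt_of_deriv_pos_at_zeros _ _ _ hIc hH hH'
  refine ⟨fun s hs t ht hs0 ht0 => ?_, fun t₀ ht₀ h0 => ⟨hH' t₀ ht₀ h0,
    fun t ht => hneg ht₀ ht h0, fun t ht => hpos ht₀ ht h0, ?_⟩⟩
  · rcases lt_trichotomy s t with hst | rfl | hts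
    · exact absurd ht0 (hpos hs ht hs0 hst).ne'
    · rfl
    · exact absurd hs0 (hpos ht hs ht0 hts).ne'
  · refine isMinOn_of_hasDerivAt_of_sign hIc hF (fun x hx hlt => ?_) (fun x hx hlt => ?_) ht₀
    · exact mul_nonpos_of_nonneg_of_nonpos (hFpos x hx).le (hneg ht₀ hx h0 hlt).le
    · exact mul_nonneg (hFpos x hx).le (hpos ht₀ hx h0 hlt).le

/-- If `F > 0` and `H` on an open interval `I` satisfy `F' = F·H` and
`H' ≥ 2ε F⁻² − 2H²` with `ε > 0`, then `H` vanishes at most once; at a zero `t₀` of `H` one has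
`H'(t₀) > 0`, `H < 0` before `t₀`, `H > 0` after `t₀`, and `t₀` is a global minimum of `F`. -/
theorem stmt_11 (I : Set ℝ) (hIo : IsOpen I) (hIc : I.OrdConnected)
    (F H H' : ℝ → ℝ) (ε : ℝ) (hε : 0 < ε)
    (hFpos : ∀ t ∈ I, 0 < F t)
    (hF : ∀ t ∈ I, HasDerivAt F (F t * H t) t)
    (hH : ∀ t ∈ I, HasDerivAt H (H' t) t)
    (hineq : ∀ t ∈ I, 2 * ε / (F t) ^ 2 - 2 * (H t) ^ 2 ≤ H' t) :
    (∀ s ∈ I, ∀ t ∈ I, H s = 0 → H t = 0 → s = t) ∧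
    (∀ t₀ ∈ I, H t₀ = 0 →
      0 < H' t₀ ∧ (∀ t ∈ I, t < t₀ → H t < 0) ∧ (∀ t ∈ I, t₀ < t → 0 < H t) ∧
      ∀ t ∈ I, F t₀ ≤ F t) :=
  stmt_11_general I hIc F H H' ε hε hFpos hF hH hineq
end

section
/- Let F : (−∞, b) → ℝ>0 and H : (−∞, b) → ℝ be differentiable, with b < ∞, satisfying F' = F·H, H' ≥ 2ε·F^{-2} − 2H² for some ε > 0, H < 0 everywhere, and liminf_{t→b} F(t) = 0. Then H(t) ≤ −√ε / F(t) for all t < b. -/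
/-- If `F > 0` and `H < 0` on `(−∞, b)` with `b < ∞` satisfy `F' = F·H`,
`H' ≥ 2ε F⁻² − 2H²` and `liminf_{t→b} F = 0`, then `H ≤ −√ε / F` on `(−∞, b)`. -/
theorem stmt_12 (b : ℝ) (F H H' : ℝ → ℝ) (ε : ℝ) (hε : 0 < ε)
    (hFpos : ∀ t < b, 0 < F t)
    (hF : ∀ t < b, HasDerivAt F (F t * H t) t)
    (hH : ∀ t < b, HasDerivAt H (H' t) t)
    (hineq : ∀ t < b, 2 * ε / (F t) ^ 2 - 2 * (H t) ^ 2 ≤ H' t)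
    (hHneg : ∀ t < b, H t < 0)
    (hliminf : Filter.liminf F (nhdsWithin b (Set.Iio b)) = 0) :
    ∀ t < b, H t ≤ -Real.sqrt ε / F t := by
  set Φ : ℝ → ℝ := fun t => 2 * ε * (F t) ^ 2 - (F t) ^ 4 * (H t) ^ 2 with hΦdef
  -- derivative of Φ
  have hΦderiv : ∀ t < b, HasDerivAt Φ
      (2 * ε * (2 * F t ^ 1 * (F t * H t)) -
        (4 * F t ^ 3 * (F t * H t) * (H t) ^ 2 + (F t) ^ 4 * (2 * H t ^ 1 * H' t))) t := by
    intro t ht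
    exact ((hF t ht).pow 2).const_mul (2 * ε) |>.sub
      (((hF t ht).pow 4).mul ((hH t ht).pow 2))
  have hΦnonneg : ∀ t < b, 0 ≤ 2 * ε * (2 * F t ^ 1 * (F t * H t)) -
      (4 * F t ^ 3 * (F t * H t) * (H t) ^ 2 + (F t) ^ 4 * (2 * H t ^ 1 * H' t)) := by
    intro t ht
    have hf : 0 < F t := hFpos t ht
    have hf2 : (0:ℝ) < F t ^ 2 := by positivity
    have hh : H t < 0 := hHneg t ht
    have h1 : 2 * ε ≤ (H' t + 2 * (H t) ^ 2) * (F t) ^ 2 := by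
      rw [← div_le_iff₀ hf2]
      have := hineq t ht
      have : 2 * ε / F t ^ 2 ≤ H' t + 2 * H t ^ 2 := by linarith
      linarith [this]
    have h2 := mul_le_mul_of_nonneg_left h1 (neg_nonneg.2 hh.le)
    nlinarith [sq_nonneg (F t), hf.le, mul_pos hf2 hf2]
  -- Φ is monotone on Iio b
  have hmono : MonotoneOn Φ (Set.Iio b) := by
    apply monotoneOn_of_deriv_nonneg (convex_Iio b)
    · intro t ht
      exact (hΦderiv t ht).continuousAt.continuousWithinAt
    · intro t ht
      rw [interior_Iio] at ht
      exact (hΦderiv t ht).differentiableAt.differentiableWithinAt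
    · intro t ht
      rw [interior_Iio] at ht
      rw [(hΦderiv t ht).deriv]
      exact hΦnonneg t ht
  intro t ht
  have hf : 0 < F t := hFpos t ht
  have hh : H t < 0 := hHneg t ht
  -- key: Φ t ≤ 0
  have hkey : Φ t ≤ 0 := by
    by_contra hpos
    push_neg at hpos
    -- find s ∈ (t, b) with 2ε (F s)^2 < Φ t, contradiction with monotonicity
    haveI hne : (nhdsWithin b (Set.Iio b)).NeBot := nhdsLT_neBot b
    have hanti : StrictAntiOn F (Set.Iio b) := by
      apply strictAntiOn_of_deriv_neg (convex_Iio b)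
      · intro s hs
        exact (hF s hs).continuousAt.continuousWithinAt
      · intro s hs
        rw [interior_Iio] at hs
        rw [(hF s hs).deriv]
        exact mul_neg_of_pos_of_neg (hFpos s hs) (hHneg s hs)
    have hcobdd : (nhdsWithin b (Set.Iio b)).IsCoboundedUnder (· ≥ ·) F := by
      apply Filter.isCoboundedUnder_ge_of_eventually_le (nhdsWithin b (Set.Iio b)) (x := F (b - 1))
      filter_upwards [Ioo_mem_nhdsLT_of_mem (a := b - 1) ⟨by linarith, le_refl b⟩] with s hs
      exact (hanti (show b - 1 ∈ Set.Iio b by simp) hs.2 hs.1).le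
    set c : ℝ := Real.sqrt (Φ t / (2 * ε)) with hc
    have hcpos : 0 < c := Real.sqrt_pos.2 (by positivity)
    have hfreq : ∃ᶠ s in nhdsWithin b (Set.Iio b), F s < c := by
      apply Filter.frequently_lt_of_liminf_lt hcobdd
      rw [hliminf]; exact hcpos
    have hev : ∀ᶠ s in nhdsWithin b (Set.Iio b), s ∈ Set.Ioo t b := by
      apply Filter.eventually_of_mem (Ioo_mem_nhdsLT_of_mem ⟨ht, le_refl b⟩)
      intro s hs; exact hs
    obtain ⟨s, hsc, hs⟩ := (hfreq.and_eventually hev).exists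
    have h1 : Φ t ≤ Φ s := hmono ht hs.2 hs.1.le
    have h2 : Φ s ≤ 2 * ε * (F s) ^ 2 := by
      have : 0 ≤ (F s) ^ 4 * (H s) ^ 2 := by positivity
      simp only [hΦdef]; linarith
    have h3 : (F s) ^ 2 < c ^ 2 := by
      have hFs : 0 ≤ F s := (hFpos s hs.2).le
      nlinarith
    have h4 : c ^ 2 = Φ t / (2 * ε) := Real.sq_sqrt (by positivity)
    have : Φ t < 2 * ε * (Φ t / (2 * ε)) := by
      calc Φ t ≤ 2 * ε * (F s) ^ 2 := le_trans h1 h2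
        _ < 2 * ε * c ^ 2 := by nlinarith
        _ = 2 * ε * (Φ t / (2 * ε)) := by rw [h4]
    rw [mul_div_cancel₀] at this
    · exact lt_irrefl _ this
    · positivity
  -- from Φ t ≤ 0: 2ε ≤ (F t * H t)^2
  have h2ε : 2 * ε ≤ (F t * H t) ^ 2 := by
    have hf2 : (0:ℝ) < F t ^ 2 := by positivity
    have : 2 * ε * F t ^ 2 ≤ (F t * H t) ^ 2 * F t ^ 2 := by
      simp only [hΦdef] at hkey; nlinarith
    exact le_of_mul_le_mul_right this hf2
  have hsq : Real.sqrt ε ≤ -(F t * H t) := by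
    have h1 : Real.sqrt ε ≤ Real.sqrt ((F t * H t) ^ 2) :=
      Real.sqrt_le_sqrt (by linarith)
    rwa [Real.sqrt_sq_eq_abs, abs_of_neg (mul_neg_of_pos_of_neg hf hh)] at h1
  rw [le_div_iff₀ hf]
  linarith [hsq, mul_comm (H t) (F t)]
end

section
/- Let F : ℝ → ℝ>0 and H : ℝ → ℝ be differentiable on all of ℝ with F' = F·H and H' ≥ 2ε·F^{-2} − 2H² for some ε > 0. Then H has a zero. (Equivalently: H cannot be everywhere negative on ℝ, since then F would be decreasing, forcing F·H → 0 and H → 0 as t → ∞, which by the differential inequality makes H' eventually bounded below by a positive constant, a contradiction.) -/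
/-!
The quantity `φ = F² H` satisfies `φ' = F² (H' + 2 H²) ≥ 2ε`, so `φ` grows at least linearly in
both directions and takes the value `0` by the intermediate value theorem; since `F > 0`, `H`
vanishes there.
-/

open Filter

theorem surjective_of_hasDerivAt_of_le_deriv {f f' : ℝ → ℝ} {c : ℝ} (hc : 0 < c)
    (hf : ∀ t, HasDerivAt f (f' t) t) (hcf' : ∀ t, c ≤ f' t) : Function.Surjective f := by
  have hmono : Monotone fun t => f t - c * t :=
    monotone_of_hasDerivAt_nonneg
      (fun t => ((hf t).sub ((hasDerivAt_id t).const_mul c)).congr_deriv (by simp))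
      fun t => sub_nonneg.mpr (hcf' t)
  have hlin : Tendsto (fun t : ℝ => f 0 + c * t) atTop atTop :=
    tendsto_atTop_add_const_left _ _ (tendsto_id.const_mul_atTop hc)
  have hlin' : Tendsto (fun t : ℝ => f 0 + c * t) atBot atBot :=
    tendsto_atBot_add_const_left _ _ (tendsto_id.const_mul_atBot hc)
  refine Continuous.surjective (continuous_iff_continuousAt.mpr fun t => (hf t).continuousAt)
    (tendsto_atTop_mono' _ ?_ hlin) (tendsto_atBot_mono' _ ?_ hlin')
  · filter_upwards [eventually_ge_atTop 0] with t ht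
    linarith [hmono ht]
  · filter_upwards [eventually_le_atBot 0] with t ht
    linarith [hmono ht]

theorem hasDerivAt_sq_mul {F H : ℝ → ℝ} {H' t : ℝ} (hF : HasDerivAt F (F t * H t) t)
    (hH : HasDerivAt H H' t) :
    HasDerivAt (fun s => F s ^ 2 * H s) (F t ^ 2 * (H' + 2 * H t ^ 2)) t :=
  ((hF.fun_pow 2).mul hH).congr_deriv (by push_cast; ring)

/-- If `F > 0` and `H` are differentiable on all of `ℝ` with `F' = F·H` and
`H' ≥ 2ε F⁻² − 2H²` for some `ε > 0`, then `H` has a zero. -/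
theorem stmt_14 (F H H' : ℝ → ℝ) (ε : ℝ) (hε : 0 < ε)
    (hFpos : ∀ t : ℝ, 0 < F t)
    (hF : ∀ t : ℝ, HasDerivAt F (F t * H t) t)
    (hH : ∀ t : ℝ, HasDerivAt H (H' t) t)
    (hineq : ∀ t : ℝ, 2 * ε / (F t) ^ 2 - 2 * (H t) ^ 2 ≤ H' t) :
    ∃ t : ℝ, H t = 0 := by
  have hgrowth : ∀ t, 2 * ε ≤ F t ^ 2 * (H' t + 2 * H t ^ 2) := fun t => by
    have hF2 : 0 < F t ^ 2 := pow_pos (hFpos t) 2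
    rw [← div_le_iff₀' hF2]
    linarith [hineq t]
  obtain ⟨t, ht⟩ := surjective_of_hasDerivAt_of_le_deriv (by positivity)
    (fun t => hasDerivAt_sq_mul (hF t) (hH t)) hgrowth 0
  exact ⟨t, (mul_eq_zero.mp ht).resolve_left (pow_pos (hFpos t) 2).ne'⟩
end
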